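/- Let G be a simple graph, let U be a simplicial set of vertices of G, and let (V_-, E_-, E_+) be a minimal chordal editing set of G such that E_- contains no edge with both endpoints in N(U). Then (V_-, E_-, E_+) does not edit U; that is, V_- contains no vertex of U and no pair in E_- ∪ E_+ has an element in U. Equivalently: a minimal chordal editing set edits a simplicial set U only if it deletes at least one edge induced by N(U). -/

import Mathlib

open SimpleGraph

variable {V : Type*}

/-- A *hole* is an induced cycle on at least 4 vertices, given as a closed walk:
the walk is a cycle of length at least 4, and any edge of `G` between support
vertices is an edge of the cycle. -/
def IsHole (G : SimpleGraph V) {v : V} (c : G.Walk v v) : Prop :=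
  c.IsCycle ∧ 4 ≤ c.length ∧
    ∀ x y : V, x ∈ c.support → y ∈ c.support → G.Adj x y → c.toSubgraph.Adj x y

/-- A graph is *chordal* if it contains no hole. -/
def ChordalGraph (G : SimpleGraph V) : Prop :=
  ∀ (v : V) (c : G.Walk v v), ¬ IsHole G c

/-- `N(X)`: the set of vertices outside `X` having a neighbor in `X`. -/
def extNbhd (G : SimpleGraph V) (X : Set V) : Set V :=
  {v | v ∉ X ∧ ∃ x ∈ X, G.Adj v x}

/-- The graph obtained from `G` by deleting the edges in `Em` and adding the
(non-diagonal) pairs in `Ep` as edges. -/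
def editGraph (G : SimpleGraph V) (Em Ep : Set (Sym2 V)) : SimpleGraph V where
  Adj x y := x ≠ y ∧ ((G.Adj x y ∧ s(x, y) ∉ Em) ∨ s(x, y) ∈ Ep)
  symm := by
    constructor
    intro x y h
    obtain ⟨hne, h⟩ := h
    refine ⟨hne.symm, ?_⟩
    rcases h with ⟨ha, hm⟩ | hp
    · exact Or.inl ⟨ha.symm, by rwa [Sym2.eq_swap]⟩
    · exact Or.inr (by rwa [Sym2.eq_swap])
  loopless := by constructor; intro x h; exact h.1 rfl

/-- `(Vm, Em, Ep)` is a chordal editing set of `G`: `Em` consists of edges of `G`,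
`Ep` consists of non-adjacent (non-diagonal) vertex pairs of `G`, and the graph
obtained from `G` by deleting the vertices of `Vm`, deleting the edges of `Em`,
and adding the pairs of `Ep` as edges is chordal. -/
def IsChordalEditingSet (G : SimpleGraph V) (Vm : Set V) (Em Ep : Set (Sym2 V)) : Prop :=
  Em ⊆ G.edgeSet ∧ (∀ e ∈ Ep, ¬ e.IsDiag ∧ e ∉ G.edgeSet) ∧
    ChordalGraph ((editGraph G Em Ep).induce Vmᶜ)

/-!
Delete from the editing set every operation that touches `U`; by minimality it suffices that
what remains is still a chordal editing set. A hole of the new edited graph that avoids `U` is a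
hole of the old one, since the two graphs agree outside `U`. A hole through a vertex of `U` stays
inside `U ∪ N(U)`: edges at `U` are no longer edited, so `N(U)` separates `U` from the other
vertices, and the two arcs of the hole between a vertex of `U` and one outside `U ∪ N(U)` would
each meet `N(U)`, in two adjacent vertices giving a chord (`N(U)` is a clique, none of its edges is
deleted). On `U ∪ N(U)` the new edited graph coincides with `G`, which is chordal there.
-/

theorem isHole_iff {G : SimpleGraph V} {v : V} {c : G.Walk v v} :
    IsHole G c ↔ c.IsCycle ∧ 4 ≤ c.length ∧
      ∀ x y, x ∈ c.support → y ∈ c.support → G.Adj x y → s(x, y) ∈ c.edges := by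
  simp only [IsHole, ← Subgraph.mem_edgeSet, Walk.mem_edges_toSubgraph]

theorem isHole_map_iff {W : Type*} {G : SimpleGraph V} {H : SimpleGraph W} (f : G ↪g H) {v : V}
    {c : G.Walk v v} : IsHole H (c.map f.toHom) ↔ IsHole G c := by
  rw [isHole_iff, isHole_iff, Walk.isCycle_map_iff_of_injective f.injective, Walk.length_map,
    Walk.support_map, Walk.edges_map]
  refine and_congr_right fun _ => and_congr_right fun _ =>
    ⟨fun h x y hx hy hxy => ?_, fun h x y hx hy hxy => ?_⟩
  · have := h (f x) (f y) (List.mem_map_of_mem hx) (List.mem_map_of_mem hy) (f.map_adj_iff.2 hxy)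
    rw [← Sym2.map_mk] at this
    exact (List.mem_map_of_injective (Sym2.map.injective f.injective)).1 this
  · obtain ⟨x, hx', rfl⟩ := List.mem_map.1 hx
    obtain ⟨y, hy', rfl⟩ := List.mem_map.1 hy
    rw [← Sym2.map_mk]
    exact List.mem_map_of_mem (h x y hx' hy' (f.map_adj_iff.1 hxy))

theorem IsHole.transfer {G H : SimpleGraph V} {v : V} {c : G.Walk v v} (hc : IsHole G c)
    (hp : ∀ e ∈ c.edges, e ∈ H.edgeSet)
    (hHG : ∀ x ∈ c.support, ∀ y ∈ c.support, H.Adj x y → G.Adj x y) :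
    IsHole H (c.transfer H hp) := by
  obtain ⟨hcyc, hlen, hchord⟩ := isHole_iff.1 hc
  refine isHole_iff.2 ⟨hcyc.transfer hp, by rwa [Walk.length_transfer], fun x y hx hy hxy => ?_⟩
  rw [Walk.support_transfer] at hx hy
  rw [Walk.edges_transfer]
  exact hchord x y hx hy (hHG x hx y hy hxy)

theorem IsHole.rotate [DecidableEq V] {G : SimpleGraph V} {u v : V} {c : G.Walk v v}
    (hc : IsHole G c) (hu : u ∈ c.support) : IsHole G (c.rotate u hu) := by
  obtain ⟨hcyc, hlen, hchord⟩ := isHole_iff.1 hc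
  have hedges := c.rotate_edges u hu
  refine isHole_iff.2 ⟨(Walk.isCycle_rotate hu).2 hcyc, ?_, fun x y hx hy hxy => ?_⟩
  · rwa [← Walk.length_edges, hedges.perm.length_eq, Walk.length_edges]
  · rw [Walk.mem_support_rotate_iff] at hx hy
    exact hedges.mem_iff.2 (hchord x y hx hy hxy)

theorem chordalGraph_induce_iff {H : SimpleGraph V} {s : Set V} :
    ChordalGraph (H.induce s) ↔
      ∀ (v : V) (c : H.Walk v v), IsHole H c → ¬ ∀ x ∈ c.support, x ∈ s := by
  refine ⟨fun h v c hc hs => ?_, fun h v c hc => ?_⟩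
  · have hc' : IsHole H ((c.induce s hs).map (Embedding.induce s).toHom) := by
      rwa [Walk.map_induce]
    exact h _ _ ((isHole_map_iff _).1 hc')
  · refine h _ _ ((isHole_map_iff (Embedding.induce s)).2 hc) fun x hx => ?_
    rw [Walk.support_map] at hx
    obtain ⟨y, -, rfl⟩ := List.mem_map.1 hx
    exact y.2

theorem ChordalGraph.not_isHole_of_adj_iff {H K : SimpleGraph V} {s : Set V}
    (hH : ChordalGraph (H.induce s)) {v : V} {c : K.Walk v v} (hs : ∀ x ∈ c.support, x ∈ s)
    (hKH : ∀ x ∈ c.support, ∀ y ∈ c.support, K.Adj x y ↔ H.Adj x y) : ¬ IsHole K c := by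
  intro hc
  have hp : ∀ e ∈ c.edges, e ∈ H.edgeSet := by
    intro e he
    induction e with
    | h x y => exact (hKH x (c.fst_mem_support_of_mem_edges he) y
        (c.snd_mem_support_of_mem_edges he)).1 (c.adj_of_mem_edges he)
  refine chordalGraph_induce_iff.1 hH v _ (hc.transfer hp fun x hx y hy => (hKH x hx y hy).2) ?_
  rwa [Walk.support_transfer]

theorem SimpleGraph.Walk.IsCycle.eq_or_eq_of_mem_takeUntil_of_mem_dropUntil [DecidableEq V]
    {G : SimpleGraph V} {u x n : V} {c : G.Walk u u} (hc : c.IsCycle) (hx : x ∈ c.support)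
    (hp : n ∈ (c.takeUntil x hx).support) (hq : n ∈ (c.dropUntil x hx).support) :
    n = u ∨ n = x := by
  have hnodup := hc.support_nodup
  rw [← c.take_spec hx, Walk.tail_support_append] at hnodup
  rw [← Walk.cons_tail_support] at hp hq
  rcases List.mem_cons.1 hp with rfl | hp
  · exact Or.inl rfl
  rcases List.mem_cons.1 hq with rfl | hq
  · exact Or.inr rfl
  exact absurd hq (List.disjoint_of_nodup_append hnodup hp)

theorem SimpleGraph.Walk.exists_mem_support_of_adj_mem_union {K : SimpleGraph V} {U N : Set V}
    (hnbr : ∀ ⦃x y⦄, K.Adj x y → x ∈ U → y ∈ U ∪ N) {a b : V} (r : K.Walk a b) (ha : a ∈ U)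
    (hb : b ∉ U) : ∃ n ∈ r.support, n ∈ N := by
  obtain ⟨d, hd, hd₁, hd₂⟩ := r.exists_boundary_dart U ha hb
  exact ⟨d.snd, r.dart_snd_mem_support_of_mem_darts hd, (hnbr d.adj hd₁).resolve_left hd₂⟩

theorem IsHole.support_subset_of_isClique {K : SimpleGraph V} {U N : Set V} (hUN : Disjoint U N)
    (hnbr : ∀ ⦃x y⦄, K.Adj x y → x ∈ U → y ∈ U ∪ N) (hN : K.IsClique N)
    {v : V} {c : K.Walk v v} (hc : IsHole K c) {u : V} (hu : u ∈ c.support) (huU : u ∈ U) :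
    ∀ x ∈ c.support, x ∈ U ∪ N := by
  classical
  intro x hx
  by_contra hxUN
  have hxU : x ∉ U := fun h => hxUN (Or.inl h)
  have hxN : x ∉ N := fun h => hxUN (Or.inr h)
  have huN : u ∉ N := Set.disjoint_left.1 hUN huU
  obtain ⟨hcyc, -, hchord⟩ := isHole_iff.1 (hc.rotate hu)
  rw [← c.mem_support_rotate_iff u hu] at hx
  generalize c.rotate u hu = c' at hcyc hchord hx
  set p := c'.takeUntil x hx
  set q := c'.dropUntil x hx
  have hinter : ∀ n ∈ N, n ∈ p.support → n ∉ q.support := fun n hn hp hq =>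
    (hcyc.eq_or_eq_of_mem_takeUntil_of_mem_dropUntil hx hp hq).elim
      (fun h => huN (h ▸ hn)) (fun h => hxN (h ▸ hn))
  obtain ⟨n₁, hn₁p, hn₁N⟩ := p.exists_mem_support_of_adj_mem_union hnbr huU hxU
  obtain ⟨n₂, hn₂q, hn₂N⟩ := q.reverse.exists_mem_support_of_adj_mem_union hnbr huU hxU
  rw [Walk.support_reverse, List.mem_reverse] at hn₂q
  have hne : n₁ ≠ n₂ := by
    rintro rfl
    exact hinter n₁ hn₁N hn₁p hn₂q
  have hedge := hchord n₁ n₂ (c'.support_takeUntil_subset_support hx hn₁p)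
    (c'.support_dropUntil_subset_support hx hn₂q) (hN hn₁N hn₂N hne)
  rw [← c'.take_spec hx, Walk.edges_append, List.mem_append] at hedge
  rcases hedge with h | h
  · exact hinter n₂ hn₂N (p.snd_mem_support_of_mem_edges h) hn₂q
  · exact hinter n₁ hn₁N hn₁p (q.fst_mem_support_of_mem_edges h)

theorem disjoint_extNbhd (G : SimpleGraph V) (U : Set V) : Disjoint U (extNbhd G U) :=
  Set.disjoint_left.2 fun _ hx hN => hN.1 hx

theorem mem_union_extNbhd_of_adj {G : SimpleGraph V} {U : Set V} {x y : V} (hxy : G.Adj x y)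
    (hx : x ∈ U) : y ∈ U ∪ extNbhd G U :=
  or_iff_not_imp_left.2 fun hy => ⟨hy, x, hx, hxy.symm⟩

theorem editGraph_adj_iff_of_notMem {G : SimpleGraph V} {Em Ep : Set (Sym2 V)} {x y : V}
    (hm : s(x, y) ∉ Em) (hp : s(x, y) ∉ Ep) : (editGraph G Em Ep).Adj x y ↔ G.Adj x y := by
  simp only [editGraph, hm, hp, not_false_eq_true, and_true, or_false, and_iff_right_iff_imp]
  exact Adj.ne

def pairsAvoiding (U : Set V) (E : Set (Sym2 V)) : Set (Sym2 V) :=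
  {e ∈ E | ∀ x ∈ e, x ∉ U}

theorem mk_mem_pairsAvoiding_iff {U : Set V} {E : Set (Sym2 V)} {x y : V} (hx : x ∉ U)
    (hy : y ∉ U) : s(x, y) ∈ pairsAvoiding U E ↔ s(x, y) ∈ E := by
  simp [pairsAvoiding, hx, hy]

theorem mk_notMem_pairsAvoiding {U : Set V} {E : Set (Sym2 V)} {x y : V} (hx : x ∈ U) :
    s(x, y) ∉ pairsAvoiding U E :=
  fun h => h.2 x (Sym2.mem_mk_left x y) hx

section Avoiding

variable {G : SimpleGraph V} {U : Set V} {Em Ep : Set (Sym2 V)} {x y : V}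

theorem editGraph_pairsAvoiding_adj_iff (hx : x ∉ U) (hy : y ∉ U) :
    (editGraph G (pairsAvoiding U Em) (pairsAvoiding U Ep)).Adj x y ↔
      (editGraph G Em Ep).Adj x y := by
  simp only [editGraph, mk_mem_pairsAvoiding_iff hx hy]

theorem editGraph_pairsAvoiding_adj_iff_of_mem (hx : x ∈ U) :
    (editGraph G (pairsAvoiding U Em) (pairsAvoiding U Ep)).Adj x y ↔ G.Adj x y :=
  editGraph_adj_iff_of_notMem (mk_notMem_pairsAvoiding hx) (mk_notMem_pairsAvoiding hx)

theorem editGraph_pairsAvoiding_adj_iff_of_mem_union (hclique : G.IsClique (extNbhd G U))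
    (hEp : ∀ e ∈ Ep, ¬ e.IsDiag ∧ e ∉ G.edgeSet) (hEm : ∀ e ∈ Em, ¬ ∀ x ∈ e, x ∈ extNbhd G U)
    (hx : x ∈ U ∪ extNbhd G U) (hy : y ∈ U ∪ extNbhd G U) :
    (editGraph G (pairsAvoiding U Em) (pairsAvoiding U Ep)).Adj x y ↔ G.Adj x y := by
  rcases hx with hxU | hxN
  · exact editGraph_pairsAvoiding_adj_iff_of_mem hxU
  rcases hy with hyU | hyN
  · rw [(editGraph _ _ _).adj_comm, G.adj_comm]
    exact editGraph_pairsAvoiding_adj_iff_of_mem hyU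
  refine editGraph_adj_iff_of_notMem (fun hm => hEm _ hm.1 ?_) fun hp => ?_
  · simp only [Sym2.mem_iff, forall_eq_or_imp, forall_eq]
    exact ⟨hxN, hyN⟩
  · obtain ⟨hdiag, hnotMem⟩ := hEp _ hp.1
    exact hnotMem (hclique hxN hyN (by simpa using hdiag))

end Avoiding

theorem IsChordalEditingSet.pairsAvoiding {G : SimpleGraph V} {U : Set V}
    (hchordal : ChordalGraph (G.induce (U ∪ extNbhd G U))) (hclique : G.IsClique (extNbhd G U))
    {Vm : Set V} {Em Ep : Set (Sym2 V)} (hces : IsChordalEditingSet G Vm Em Ep)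
    (hEm : ∀ e ∈ Em, ¬ ∀ x ∈ e, x ∈ extNbhd G U) :
    IsChordalEditingSet G (Vm \ U) (pairsAvoiding U Em) (pairsAvoiding U Ep) := by
  obtain ⟨hEmG, hEpG, hchordalEdit⟩ := hces
  refine ⟨fun e he => hEmG he.1, fun e he => hEpG e he.1, chordalGraph_induce_iff.2 ?_⟩
  intro v c hc hVm
  by_cases hU : ∀ x ∈ c.support, x ∉ U
  · exact hchordalEdit.not_isHole_of_adj_iff (fun x hx hxVm => hVm x hx ⟨hxVm, hU x hx⟩)
      (fun x hx y hy => editGraph_pairsAvoiding_adj_iff (hU x hx) (hU y hy)) hc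
  · obtain ⟨u, hu, huU⟩ : ∃ u ∈ c.support, u ∈ U := by simpa using hU
    have hsupp : ∀ x ∈ c.support, x ∈ U ∪ extNbhd G U :=
      hc.support_subset_of_isClique (disjoint_extNbhd G U)
        (fun x y hxy hx => mem_union_extNbhd_of_adj
          ((editGraph_pairsAvoiding_adj_iff_of_mem hx).1 hxy) hx)
        (fun x hx y hy hxy => (editGraph_pairsAvoiding_adj_iff_of_mem_union hclique hEpG hEm
          (Or.inr hx) (Or.inr hy)).2 (hclique hx hy hxy)) hu huU
    exact hchordal.not_isHole_of_adj_iff hsupp (fun x hx y hy =>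
      editGraph_pairsAvoiding_adj_iff_of_mem_union hclique hEpG hEm (hsupp x hx) (hsupp y hy)) hc

/-- Let `U` be a simplicial set of vertices of `G` and let
`(Vm, Em, Ep)` be a minimal chordal editing set of `G` such that `Em` contains no
edge with both endpoints in `N(U)`.  Then `(Vm, Em, Ep)` does not edit `U`:
`Vm` contains no vertex of `U`, and no pair of `Em ∪ Ep` has an element in `U`. -/
theorem stmt5 {V : Type*} (G : SimpleGraph V) (U : Set V)
    (hchordal : ChordalGraph (G.induce (U ∪ extNbhd G U)))
    (hclique : G.IsClique (extNbhd G U))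
    (Vm : Set V) (Em Ep : Set (Sym2 V))
    (hces : IsChordalEditingSet G Vm Em Ep)
    (hmin : ∀ (Vm' : Set V) (Em' Ep' : Set (Sym2 V)),
      IsChordalEditingSet G Vm' Em' Ep' → Vm' ⊆ Vm → Em' ⊆ Em → Ep' ⊆ Ep →
      Vm' = Vm ∧ Em' = Em ∧ Ep' = Ep)
    (hEm : ∀ e ∈ Em, ¬ ∀ x ∈ e, x ∈ extNbhd G U) :
    (∀ x ∈ Vm, x ∉ U) ∧ (∀ e ∈ Em ∪ Ep, ∀ x ∈ e, x ∉ U) := by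
  obtain ⟨hVm, hEm', hEp'⟩ := hmin _ _ _ (hces.pairsAvoiding hchordal hclique hEm)
    Set.sdiff_subset (Set.sep_subset _ _) (Set.sep_subset _ _)
  refine ⟨fun x hx => ?_, fun e he => ?_⟩
  · rw [← hVm] at hx
    exact hx.2
  · rcases he with he | he
    · rw [← hEm'] at he
      exact he.2
    · rw [← hEp'] at he
      exact he.2
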